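/- arXiv:2510.17624 — 3 statements merged into one kernel-verified Lean document; each statement's English description precedes it below -/
import Mathlib

section
/- Let (a*, b*, x*) be feasible for the master problem with level v: aᵀy ≤ b − 1 for all y ∈ X with ĉᵀy ≤ v − 1, ĉᵀx* = v, a*ᵀx* ≥ b*, and x* ∈ D ∩ X. Then x* is a minimizer of ĉᵀx over {x ∈ X : a*ᵀx ≥ b*}, and hence (a*,b*) is a weak counterfactual explanation. -/
/-- feasibility for the weak-CE master problem at level v implies that x*
is a minimizer, hence (a*,b*) is a weak counterfactual explanation. -/
theorem stmt_3 (n : ℕ) (X D : Set (Fin n → ℤ)) (c astar : Fin n → ℤ) (bstar v : ℤ)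
    (xstar : Fin n → ℤ)
    (hcut : ∀ y ∈ X, (∑ i, c i * y i) ≤ v - 1 → (∑ i, astar i * y i) ≤ bstar - 1)
    (hval : (∑ i, c i * xstar i) = v)
    (hfeas : (∑ i, astar i * xstar i) ≥ bstar)
    (hx : xstar ∈ D ∩ X) :
    xstar ∈ X ∧ (∑ i, astar i * xstar i) ≥ bstar ∧ xstar ∈ D ∧
    ∀ y ∈ X, (∑ i, astar i * y i) ≥ bstar →
      (∑ i, c i * xstar i) ≤ (∑ i, c i * y i) := by
  refine ⟨hx.2, hfeas, hx.1, fun y hy hay => ?_⟩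
  by_contra h
  push_neg at h
  have : (∑ i, c i * y i) ≤ v - 1 := by omega
  have := hcut y hy this
  omega
end

section
/- Let (a*, b*, x*) be feasible for the strong master problem with level v: a*ᵀy ≤ b* − 1 for all y ∈ X \ D with ĉᵀy ≤ v, ĉᵀx* = v, a*ᵀx* ≥ b*, and x* ∈ D ∩ X. Then every minimizer of ĉᵀx over {x ∈ X : a*ᵀx ≥ b*} lies in D, i.e., (a*,b*) is a strong counterfactual explanation. -/
/-- feasibility for the strong-CE master problem at level v implies that
every minimizer lies in D, i.e. (a*,b*) is a strong counterfactual explanation. -/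
theorem stmt_4 (n : ℕ) (X D : Set (Fin n → ℤ)) (hXfin : X.Finite)
    (c astar : Fin n → ℤ) (bstar v : ℤ) (xstar : Fin n → ℤ)
    (hcut : ∀ y ∈ X, y ∉ D → (∑ i, c i * y i) ≤ v → (∑ i, astar i * y i) ≤ bstar - 1)
    (hval : (∑ i, c i * xstar i) = v)
    (hfeas : (∑ i, astar i * xstar i) ≥ bstar)
    (hx : xstar ∈ D ∩ X) :
    ∀ y ∈ X, (∑ i, astar i * y i) ≥ bstar →
      (∀ z ∈ X, (∑ i, astar i * z i) ≥ bstar →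
        (∑ i, c i * y i) ≤ (∑ i, c i * z i)) → y ∈ D := by
  intro y hy hay hmin
  by_contra hyD
  have hle : (∑ i, c i * y i) ≤ v := hval ▸ hmin xstar hx.2 hfeas
  have := hcut y hy hyD hle
  omega
end

section
/- Consider the binary knapsack interdiction setting: items [n] with positive integer profits c̄ and weights ā, capacity b̄, threshold K, interdiction budget k. There exists a subset I ⊆ [n] with |I| ≤ k such that every x ∈ {0,1}ⁿ with x_i = 0 for all i ∈ I and āᵀx ≤ b̄ satisfies c̄ᵀx < K, if and only if there exists a ∈ H_a that is a weak counterfactual explanation for the present problem min{−c̄ᵀx : −āᵀx ≥ −b̄, x ∈ {0,1}ⁿ} with D = {x ∈ {0,1}ⁿ : −c̄ᵀx ≥ −K + 1}, where H_a = {a : a_i = −ā_i − δ_i b̄, δ ∈ {0,1}ⁿ, Σδ_i ≤ k}. -/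
private lemma sum_rw {n : ℕ} (abar δ x : Fin n → ℤ) (bbar : ℤ) :
    ∑ i, (-abar i - δ i * bbar) * x i
      = -(∑ i, abar i * x i) - (∑ i, δ i * x i) * bbar := by
  rw [Finset.sum_mul, ← Finset.sum_neg_distrib, ← Finset.sum_sub_distrib]
  exact Finset.sum_congr rfl (fun i _ => by ring)

private lemma feas_iff {n : ℕ} {abar δ x : Fin n → ℤ} {bbar : ℤ}
    (ha : ∀ i, 0 < abar i) (hb : 0 < bbar)
    (hδ : ∀ i, δ i = 0 ∨ δ i = 1) (hx : ∀ i, x i = 0 ∨ x i = 1) :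
    (-bbar ≤ ∑ i, (-abar i - δ i * bbar) * x i) ↔
      ((∀ i, δ i = 1 → x i = 0) ∧ ∑ i, abar i * x i ≤ bbar) := by
  have hax : ∀ i, 0 ≤ abar i * x i := by
    intro i; rcases hx i with h | h <;> simp [h, (ha i).le]
  have hD0 : (∀ i, δ i = 1 → x i = 0) → ∑ i, δ i * x i = 0 := by
    intro h
    refine Finset.sum_eq_zero (fun i _ => ?_)
    rcases hδ i with h1 | h1
    · simp [h1]
    · simp [h i h1]
  constructor
  · intro hfeas
    rw [sum_rw] at hfeas
    have hclaim : ∀ i, δ i = 1 → x i = 0 := by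
      by_contra hcon
      push_neg at hcon
      obtain ⟨i0, hδ1, hx0⟩ := hcon
      have hx1 : x i0 = 1 := (hx i0).resolve_left hx0
      have hS : abar i0 * x i0 ≤ ∑ i, abar i * x i :=
        Finset.single_le_sum (fun i _ => hax i) (Finset.mem_univ i0)
      have hD : δ i0 * x i0 ≤ ∑ i, δ i * x i := by
        refine Finset.single_le_sum (f := fun i => δ i * x i) (fun i _ => ?_) (Finset.mem_univ i0)
        rcases hδ i with h | h <;> rcases hx i with h' | h' <;> simp [h, h']
      rw [hδ1, hx1] at hD
      rw [hx1] at hS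
      have h1 : (1 : ℤ) ≤ abar i0 := ha i0
      nlinarith [hD, hS, hb]
    refine ⟨hclaim, ?_⟩
    rw [hD0 hclaim] at hfeas
    linarith
  · rintro ⟨h1, h2⟩
    rw [sum_rw, hD0 h1]
    linarith

private lemma exists_opt {n : ℕ} (cbar a : Fin n → ℤ) (bbar : ℤ) (hb : 0 < bbar) :
    ∃ x : Fin n → ℤ, (∀ i, x i = 0 ∨ x i = 1) ∧ (∑ i, a i * x i) ≥ -bbar ∧
      ∀ y : Fin n → ℤ, (∀ i, y i = 0 ∨ y i = 1) → (∑ i, a i * y i) ≥ -bbar →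
        (∑ i, cbar i * y i) ≤ (∑ i, cbar i * x i) := by
  classical
  set F : (Fin n → Bool) → (Fin n → ℤ) := fun b i => if b i then 1 else 0 with hF
  set T : Finset (Fin n → Bool) :=
    Finset.univ.filter (fun b => -bbar ≤ ∑ i, a i * F b i) with hT
  have hTne : T.Nonempty := by
    refine ⟨fun _ => false, ?_⟩
    simp only [hT, Finset.mem_filter, Finset.mem_univ, true_and, hF]
    simp
    linarith
  obtain ⟨b, hbT, hmax⟩ := T.exists_max_image (fun b => ∑ i, cbar i * F b i) hTne
  refine ⟨F b, fun i => by by_cases h : b i <;> simp [hF, h], ?_, ?_⟩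
  · simpa [hT] using (Finset.mem_filter.mp hbT).2
  · intro y hy hyf
    have hEq : F (fun i => decide (y i = 1)) = y := by
      funext i
      rcases hy i with h | h <;> simp [hF, h]
    have hmem : (fun i => decide (y i = 1)) ∈ T := by
      simp only [hT, Finset.mem_filter, Finset.mem_univ, true_and]
      rw [hEq]; exact hyf
    simpa [hEq] using hmax _ hmem

/-- equivalence of the unitary bilevel interdiction knapsack problem and
the existence of a weak counterfactual explanation in the constructed instance. -/
theorem stmt_9 (n : ℕ) (cbar abar : Fin n → ℤ) (bbar K : ℤ) (k : ℕ)
    (hc : ∀ i, 0 < cbar i) (ha : ∀ i, 0 < abar i) (hb : 0 < bbar) :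
    (∃ I : Finset (Fin n), I.card ≤ k ∧
      ∀ x : Fin n → ℤ, (∀ i, x i = 0 ∨ x i = 1) → (∀ i ∈ I, x i = 0) →
        (∑ i, abar i * x i) ≤ bbar → (∑ i, cbar i * x i) < K) ↔
    (∃ a : Fin n → ℤ,
      (∃ δ : Fin n → ℤ, (∀ i, δ i = 0 ∨ δ i = 1) ∧ (∑ i, δ i) ≤ (k : ℤ) ∧
        ∀ i, a i = -abar i - δ i * bbar) ∧
      ∃ x : Fin n → ℤ, (∀ i, x i = 0 ∨ x i = 1) ∧
        (∑ i, a i * x i) ≥ -bbar ∧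
        (-(∑ i, cbar i * x i) ≥ -K + 1) ∧
        ∀ y : Fin n → ℤ, (∀ i, y i = 0 ∨ y i = 1) → (∑ i, a i * y i) ≥ -bbar →
          -(∑ i, cbar i * x i) ≤ -(∑ i, cbar i * y i)) := by
  classical
  constructor
  · rintro ⟨I, hIcard, hI⟩
    set δ : Fin n → ℤ := fun i => if i ∈ I then 1 else 0 with hδdef
    have hδbin : ∀ i, δ i = 0 ∨ δ i = 1 := by
      intro i; by_cases h : i ∈ I <;> simp [hδdef, h]
    set a : Fin n → ℤ := fun i => -abar i - δ i * bbar with hadef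
    obtain ⟨x, hxbin, hxfeas, hxmax⟩ := exists_opt cbar a bbar hb
    have hxfeas' : -bbar ≤ ∑ i, (-abar i - δ i * bbar) * x i := hxfeas
    obtain ⟨hx0, hxw⟩ := (feas_iff ha hb hδbin hxbin).mp hxfeas'
    have hsumδ : ∑ i, δ i = (I.card : ℤ) := by
      simp [hδdef, Finset.sum_ite_mem]
    refine ⟨a, ⟨δ, hδbin, by rw [hsumδ]; exact_mod_cast hIcard, fun i => rfl⟩,
      x, hxbin, hxfeas, ?_, ?_⟩
    · have := hI x hxbin (fun i hi => hx0 i (by simp [hδdef, hi])) hxw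
      linarith
    · intro y hy hyf
      have := hxmax y hy hyf
      linarith
  · rintro ⟨a, ⟨δ, hδbin, hδsum, hadef⟩, x, hxbin, hxfeas, hxK, hxmax⟩
    refine ⟨Finset.univ.filter (fun i => δ i = 1), ?_, ?_⟩
    · have hcard : ((Finset.univ.filter (fun i => δ i = 1)).card : ℤ) = ∑ i, δ i := by
        rw [Finset.card_filter]
        push_cast
        refine Finset.sum_congr rfl (fun i _ => ?_)
        rcases hδbin i with h | h <;> simp [h]
      have : ((Finset.univ.filter (fun i => δ i = 1)).card : ℤ) ≤ (k : ℤ) := by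
        rw [hcard]; exact hδsum
      exact_mod_cast this
    · intro y hybin hy0 hyw
      have hyδ : ∀ i, δ i = 1 → y i = 0 := by
        intro i hi
        exact hy0 i (by simp [hi])
      have hyfeas : -bbar ≤ ∑ i, a i * y i := by
        have := (feas_iff ha hb hδbin hybin).mpr ⟨hyδ, hyw⟩
        calc -bbar ≤ ∑ i, (-abar i - δ i * bbar) * y i := this
          _ = ∑ i, a i * y i := Finset.sum_congr rfl (fun i _ => by rw [hadef i])
      have hle := hxmax y hybin hyfeas
      linarith
end
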